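/- Let h be a Lie algebra over a field k and let h₀ be any invariant symmetric bilinear form on h. Then the bracket [(a,α),(b,β)] = ([a,b], −β∘ad_a + α∘ad_b) on the vector space h ⊕ h* (where h* is the dual space and ad_a denotes b ↦ [a,b]) satisfies the Jacobi identity, and the bilinear form Ω((a,α),(b,β)) = α(b) + β(a) + h₀(a,b) on h ⊕ h* is symmetric, invariant, and nondegenerate. In particular, the coadjoint extension of any Lie algebra is a metric Lie algebra. -/

import Mathlib

/-!
The first component of the Jacobi sum is the Jacobi identity of `h`; evaluated at `w`, the
second collapses, by the Jacobi identity in the form `⁅a, ⁅b, w⁆⁆ = ⁅⁅a, b⁆, w⁆ + ⁅b, ⁅a, w⁆⁆`,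
into cancelling pairs. Invariance of `Ω = coadjointForm h₀` reduces to invariance of `h₀` plus antisymmetry of the
bracket, and `Ω` is nondegenerate because pairing with `(0, β)` and `(b, 0)` recovers `β(a)` and
`α(b)`, and the dual of a vector space separates points.
-/

/-- The coadjoint-extension bracket on `h ⊕ h*`:
`[(a,α),(b,β)] = ([a,b], −β∘ad_a + α∘ad_b)`. -/
def coadjointBracket (k : Type*) [Field k] (h : Type*) [LieRing h] [LieAlgebra k h]
    (x y : h × Module.Dual k h) : h × Module.Dual k h :=
  (⁅x.1, y.1⁆, - y.2 ∘ₗ LieAlgebra.ad k h x.1 + x.2 ∘ₗ LieAlgebra.ad k h y.1)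

namespace coadjointBracket

variable {k : Type*} [Field k] {h : Type*} [LieRing h] [LieAlgebra k h]

@[simp]
theorem fst (x y : h × Module.Dual k h) : (coadjointBracket k h x y).1 = ⁅x.1, y.1⁆ := rfl

@[simp]
theorem snd_apply (x y : h × Module.Dual k h) (w : h) :
    (coadjointBracket k h x y).2 w = x.2 ⁅y.1, w⁆ - y.2 ⁅x.1, w⁆ := by
  simp only [coadjointBracket, LinearMap.add_apply, LinearMap.neg_apply, LinearMap.comp_apply,
    LieAlgebra.ad_apply]
  abel

theorem jacobi (x y z : h × Module.Dual k h) :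
    coadjointBracket k h x (coadjointBracket k h y z) +
        coadjointBracket k h y (coadjointBracket k h z x) +
          coadjointBracket k h z (coadjointBracket k h x y) = 0 := by
  refine Prod.ext (by simpa using lie_jacobi x.1 y.1 z.1) (LinearMap.ext fun w => ?_)
  simp only [Prod.snd_add, Prod.snd_zero, LinearMap.add_apply, LinearMap.zero_apply, snd_apply,
    fst, lie_lie, map_sub]
  abel

end coadjointBracket

def coadjointForm {k h : Type*} [Field k] [AddCommGroup h] [Module k h]
    (h₀ : h →ₗ[k] h →ₗ[k] k) (x y : h × Module.Dual k h) : k :=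
  x.2 y.1 + y.2 x.1 + h₀ x.1 y.1

namespace coadjointForm

variable {k h : Type*} [Field k]

theorem comm [AddCommGroup h] [Module k h] {h₀ : h →ₗ[k] h →ₗ[k] k}
    (h₀symm : ∀ a b : h, h₀ a b = h₀ b a) (x y : h × Module.Dual k h) :
    coadjointForm h₀ x y = coadjointForm h₀ y x := by
  rw [coadjointForm, coadjointForm, h₀symm, add_comm (x.2 y.1)]

theorem eq_zero_of_forall [AddCommGroup h] [Module k h] (h₀ : h →ₗ[k] h →ₗ[k] k)
    {x : h × Module.Dual k h} (hx : ∀ y, coadjointForm h₀ x y = 0) : x = 0 := by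
  have hfst : x.1 = 0 :=
    (Module.forall_dual_apply_eq_zero_iff k x.1).mp fun β => by
      simpa [coadjointForm] using hx (0, β)
  have hsnd : x.2 = 0 := LinearMap.ext fun b => by
    simpa [coadjointForm, hfst] using hx (b, 0)
  exact Prod.ext hfst hsnd

theorem lie_add_lie [LieRing h] [LieAlgebra k h] {h₀ : h →ₗ[k] h →ₗ[k] k}
    (h₀inv : ∀ a b c : h, h₀ ⁅c, a⁆ b + h₀ a ⁅c, b⁆ = 0) (x y z : h × Module.Dual k h) :
    coadjointForm h₀ (coadjointBracket k h z x) y +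
      coadjointForm h₀ x (coadjointBracket k h z y) = 0 := by
  have hskew : z.2 ⁅y.1, x.1⁆ = - z.2 ⁅x.1, y.1⁆ := by
    rw [← lie_skew x.1 y.1, map_neg, neg_neg]
  simp only [coadjointForm, coadjointBracket.fst, coadjointBracket.snd_apply]
  linear_combination h₀inv x.1 y.1 z.1 + hskew

end coadjointForm

/-- For any Lie algebra `h` over a field `k` and any invariant symmetric
bilinear form `h₀` on `h`, the coadjoint-extension bracket on `h ⊕ h*` satisfies the Jacobi
identity, and the bilinear form `Ω((a,α),(b,β)) = α(b) + β(a) + h₀(a,b)` is symmetric,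
invariant and nondegenerate; hence the coadjoint extension of any Lie algebra is a metric Lie
algebra. -/
theorem coadjoint_extension_is_metric_lie_algebra
    (k : Type*) [Field k] (h : Type*) [LieRing h] [LieAlgebra k h]
    (h₀ : h →ₗ[k] h →ₗ[k] k)
    (h₀symm : ∀ a b : h, h₀ a b = h₀ b a)
    (h₀inv : ∀ a b c : h, h₀ ⁅c, a⁆ b + h₀ a ⁅c, b⁆ = 0) :
    (∀ x y z : h × Module.Dual k h,
        coadjointBracket k h x (coadjointBracket k h y z) +
          coadjointBracket k h y (coadjointBracket k h z x) +
            coadjointBracket k h z (coadjointBracket k h x y) = 0) ∧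
    (∀ x y : h × Module.Dual k h,
        (x.2 y.1 + y.2 x.1 + h₀ x.1 y.1) = (y.2 x.1 + x.2 y.1 + h₀ y.1 x.1)) ∧
    (∀ x y z : h × Module.Dual k h,
        ((coadjointBracket k h z x).2 y.1 + y.2 (coadjointBracket k h z x).1 +
            h₀ (coadjointBracket k h z x).1 y.1) +
          (x.2 (coadjointBracket k h z y).1 + (coadjointBracket k h z y).2 x.1 +
            h₀ x.1 (coadjointBracket k h z y).1) = 0) ∧
    (∀ x : h × Module.Dual k h,
        (∀ y : h × Module.Dual k h, x.2 y.1 + y.2 x.1 + h₀ x.1 y.1 = 0) → x = 0) :=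
  ⟨coadjointBracket.jacobi, coadjointForm.comm h₀symm, coadjointForm.lie_add_lie h₀inv,
    fun _ => coadjointForm.eq_zero_of_forall h₀⟩
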